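/- Let μ > 0 and N ≥ 1. Then the (N+1)×(N+1) matrix L^{(N)}_μ is invertible, its first column satisfies ‖((L^{(N)}_μ)⁻¹)_{col(1)}‖_{ℓ¹} = 1, and ‖(L^{(N)}_μ)⁻¹‖_{B(ℓ¹)} ≤ max{ 2‖T_N(μ)⁻¹‖₁ , 1 }. -/

import Mathlib

/-- The `N × N` tridiagonal matrix `T_N(μ)` with diagonal `2, 4, …, 2N`, subdiagonal `μ`
and superdiagonal `-μ` (0-based indexing). -/
noncomputable def Tmat (N : ℕ) (μ : ℝ) : Matrix (Fin N) (Fin N) ℝ :=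
  Matrix.of fun i j =>
    if (i : ℕ) = (j : ℕ) then 2 * (((i : ℕ) : ℝ) + 1)
    else if (i : ℕ) = (j : ℕ) + 1 then μ
    else if (j : ℕ) = (i : ℕ) + 1 then -μ
    else 0

/-- The matrix norm induced by the `‖·‖₁` vector norm: the maximum over columns of the
sum of absolute values of the entries of the column. -/
noncomputable def mat1norm {m n : ℕ} (A : Matrix (Fin m) (Fin n) ℝ) : ℝ :=
  ⨆ l : Fin n, ∑ i : Fin m, |A i l|

/-- The `(N+1) × (N+1)` matrix `L^{(N)}_μ`: first row `(1, −2, 2, −2, …)`, first column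
`(1, μ, 0, …, 0)ᵀ`, and bottom-right `N × N` block equal to `T_N(μ)` (0-based indexing). -/
noncomputable def Lmat (N : ℕ) (μ : ℝ) : Matrix (Fin (N + 1)) (Fin (N + 1)) ℝ :=
  Matrix.of fun i j =>
    if (i : ℕ) = 0 then (if (j : ℕ) = 0 then 1 else 2 * (-1 : ℝ) ^ (j : ℕ))
    else if (j : ℕ) = 0 then (if (i : ℕ) = 1 then μ else 0)
    else if (i : ℕ) = (j : ℕ) then 2 * ((i : ℕ) : ℝ)
    else if (i : ℕ) = (j : ℕ) + 1 then μ
    else if (j : ℕ) = (i : ℕ) + 1 then -μ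
    else 0

/-- The weighted ℓ¹ norm of a vector in `ℝ^{N+1}`: `‖v‖ = |v_1| + 2 Σ_{j=2}^{N+1} |v_j|`. -/
noncomputable def vecl1 {N : ℕ} (v : Fin (N + 1) → ℝ) : ℝ :=
  |v 0| + 2 * ∑ j : Fin N, |v j.succ|

/-- The `B(ℓ¹)` operator norm of an `(N+1) × (N+1)` matrix:
`max { |A_{1,1}| + 2 Σ_{j≥2} |A_{j,1}| , max_{n≥2} ( (1/2)|A_{1,n}| + Σ_{j≥2} |A_{j,n}| ) }`. -/
noncomputable def matBl1 {N : ℕ} (A : Matrix (Fin (N + 1)) (Fin (N + 1)) ℝ) : ℝ :=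
  max (|A 0 0| + 2 * ∑ j : Fin N, |A j.succ 0|)
    (⨆ n : Fin N, ((1 / 2) * |A 0 n.succ| + ∑ j : Fin N, |A j.succ n.succ|))


/-!
Let `t` be Miller's backward recurrence for the modified Bessel functions `I_m(μ)`:
`t_{N+1} = 0`, `t_N = 1`, `μ t_{m-1} = 2m t_m + μ t_{m+1}`. For `μ > 0` it is nonnegative, and
`u_k = (-1)^k t_k` is annihilated by every row of `L` except the first, where it gives
`w = t_0 + 2 Σ_{k ≥ 1} t_k = ‖u‖_{ℓ¹} ≥ t_N = 1`. Hence the first column of `L⁻¹` is `u / w`.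
If `T z = e_n`, then `L (0, z) = e_{n+1} + σ e_0` with `σ = Σ_j 2 (-1)^j z_j`, so the column
`n + 1` of `L⁻¹` is `(0, z) - (σ / w) u`; as `|σ| ≤ 2 ‖z‖₁`, its `ℓ¹` norm is at most `4 ‖z‖₁`.
`T` is invertible since `T + Tᵀ` is a positive diagonal matrix.
-/

open Finset Matrix

theorem Matrix.isUnit_det_of_posDef_add_transpose {n : Type*} [Fintype n] [DecidableEq n]
    {A : Matrix n n ℝ} (hA : (A + Aᵀ).PosDef) : IsUnit A.det := by
  refine isUnit_iff_ne_zero.2 fun hdet => ?_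
  obtain ⟨v, hv, hAv⟩ := exists_mulVec_eq_zero_iff.2 hdet
  have := hA.dotProduct_mulVec_pos hv
  rw [add_mulVec, dotProduct_add, dotProduct_mulVec _ Aᵀ, vecMul_transpose] at this
  simp [hAv] at this

theorem Tmat_add_transpose (N : ℕ) (μ : ℝ) :
    Tmat N μ + (Tmat N μ)ᵀ = diagonal fun i : Fin N => 4 * ((i : ℕ) + 1 : ℝ) := by
  ext i j
  rcases eq_or_ne i j with rfl | hij
  · simp only [Matrix.add_apply, transpose_apply, Tmat, of_apply, diagonal_apply_eq, if_true]
    ring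
  · have : (i : ℕ) ≠ j := Fin.val_ne_of_ne hij
    simp only [Matrix.add_apply, transpose_apply, Tmat, of_apply, diagonal_apply_ne _ hij]
    split_ifs <;> first | omega | ring

theorem isUnit_det_Tmat (N : ℕ) (μ : ℝ) : IsUnit (Tmat N μ).det :=
  isUnit_det_of_posDef_add_transpose <| by
    rw [Tmat_add_transpose]
    exact .diagonal fun i => by positivity

noncomputable def millerRev (μ : ℝ) (N : ℕ) : ℕ → ℝ
  | 0 => 0
  | 1 => 1
  | k + 2 => 2 * ((N - k : ℕ) : ℝ) / μ * millerRev μ N (k + 1) + millerRev μ N k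

noncomputable def millerSeq (μ : ℝ) (N : ℕ) (j : ℕ) : ℝ := millerRev μ N (N + 1 - j)

section millerSeq

variable {μ : ℝ} {N : ℕ}

theorem millerRev_nonneg (hμ : 0 ≤ μ) (k : ℕ) : 0 ≤ millerRev μ N k := by
  induction k using Nat.strong_induction_on with
  | _ k ih =>
    match k, ih with
    | 0, _ => exact le_rfl
    | 1, _ => exact zero_le_one
    | k + 2, ih =>
      rw [millerRev]
      have := ih k (by omega)
      have := ih (k + 1) (by omega)
      positivity

theorem millerSeq_nonneg (hμ : 0 ≤ μ) (j : ℕ) : 0 ≤ millerSeq μ N j :=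
  millerRev_nonneg hμ _

@[simp] theorem millerSeq_self : millerSeq μ N N = 1 := by
  simp [millerSeq, millerRev]

@[simp] theorem millerSeq_succ_self : millerSeq μ N (N + 1) = 0 := by
  simp [millerSeq, millerRev]

theorem millerSeq_recurrence (hμ : μ ≠ 0) {m : ℕ} (hm : m < N) :
    μ * millerSeq μ N m = 2 * (m + 1) * millerSeq μ N (m + 1) + μ * millerSeq μ N (m + 2) := by
  obtain ⟨k, rfl⟩ := Nat.exists_eq_add_of_lt hm
  have h₁ : m + k + 1 + 1 - m = k + 2 := by omega
  have h₂ : m + k + 1 - k = m + 1 := by omega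
  simp only [millerSeq, h₁, millerRev, h₂]
  rw [show m + k + 1 + 1 - (m + 1) = k + 1 by omega, show m + k + 1 + 1 - (m + 2) = k by omega]
  push_cast
  field_simp

end millerSeq

section Lmat

variable {N : ℕ} {μ : ℝ}

@[simp] theorem Lmat_zero_zero : Lmat N μ 0 0 = 1 := by simp [Lmat]

@[simp] theorem Lmat_zero_succ (j : Fin N) : Lmat N μ 0 j.succ = 2 * (-1) ^ ((j : ℕ) + 1) := by
  simp [Lmat]

@[simp] theorem Lmat_succ_succ (i j : Fin N) : Lmat N μ i.succ j.succ = Tmat N μ i j := by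
  simp only [Lmat, Tmat, of_apply, Fin.val_succ]
  split_ifs <;> first | contradiction | omega | (push_cast; ring)

theorem Lmat_mulVec_zero (v : Fin (N + 1) → ℝ) :
    (Lmat N μ *ᵥ v) 0 = v 0 + ∑ j : Fin N, 2 * (-1) ^ ((j : ℕ) + 1) * v j.succ := by
  simp [mulVec, dotProduct, Fin.sum_univ_succ]

theorem Lmat_mulVec_cons_zero (z : Fin N → ℝ) :
    Lmat N μ *ᵥ Fin.cons 0 z =
      Fin.cons (∑ j : Fin N, 2 * (-1) ^ ((j : ℕ) + 1) * z j) (Tmat N μ *ᵥ z) := by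
  ext i
  refine Fin.cases ?_ (fun i => ?_) i
  · simp [Lmat_mulVec_zero]
  · simp [mulVec, dotProduct, Fin.sum_univ_succ]

theorem Lmat_succ_apply (i : Fin N) (k : Fin (N + 1)) :
    Lmat N μ i.succ k = (if (k : ℕ) = i then μ else 0) +
      (if (k : ℕ) = i + 1 then 2 * (((i : ℕ) : ℝ) + 1) else 0) -
        (if (k : ℕ) = i + 2 then μ else 0) := by
  simp only [Lmat, of_apply, Fin.val_succ]
  split_ifs <;> first | contradiction | omega | (push_cast; ring)

theorem Lmat_mulVec_succ {V : ℕ → ℝ} (hV : V (N + 1) = 0) (i : Fin N) :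
    (Lmat N μ *ᵥ fun k => V k) i.succ =
      μ * V i + 2 * ((i : ℕ) + 1) * V (i + 1) - μ * V (i + 2) := by
  let f : ℕ → ℝ := fun k => ((if k = i then μ else 0) +
      (if k = (i : ℕ) + 1 then 2 * (((i : ℕ) : ℝ) + 1) else 0) -
        (if k = (i : ℕ) + 2 then μ else 0)) * V k
  calc (Lmat N μ *ᵥ fun k => V k) i.succ = ∑ k ∈ range (N + 1), f k := by
        simp only [mulVec, dotProduct, Lmat_succ_apply]
        exact Fin.sum_univ_eq_sum_range f _
    _ = _ := by
        simp only [f, add_mul, sub_mul, ite_mul, zero_mul, sum_add_distrib, sum_sub_distrib,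
          sum_ite_eq', mem_range]
        rw [if_pos (by omega), if_pos (by omega)]
        split_ifs with h
        · ring
        · rw [show (i : ℕ) + 2 = N + 1 by omega, hV]; ring

end Lmat

noncomputable def signedMiller (μ : ℝ) (N : ℕ) : Fin (N + 1) → ℝ :=
  fun k => (-1) ^ (k : ℕ) * millerSeq μ N k

noncomputable def millerWeight (μ : ℝ) (N : ℕ) : ℝ :=
  millerSeq μ N 0 + 2 * ∑ j : Fin N, millerSeq μ N (j + 1)

section signedMiller

variable {μ : ℝ} {N : ℕ}

theorem one_le_millerWeight (hμ : 0 ≤ μ) : 1 ≤ millerWeight μ N := by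
  have hsum : millerSeq μ N N ≤ ∑ k : Fin (N + 1), millerSeq μ N k :=
    single_le_sum (f := fun k : Fin (N + 1) => millerSeq μ N k)
      (fun k _ => millerSeq_nonneg hμ k) (mem_univ (Fin.last N))
  have hnonneg : 0 ≤ ∑ j : Fin N, millerSeq μ N (j + 1) :=
    sum_nonneg fun j _ => millerSeq_nonneg hμ _
  rw [Fin.sum_univ_succ] at hsum
  simp only [millerSeq_self, Fin.val_zero, Fin.val_succ] at hsum
  unfold millerWeight
  linarith

theorem vecl1_signedMiller (hμ : 0 ≤ μ) : vecl1 (signedMiller μ N) = millerWeight μ N := by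
  simp [vecl1, millerWeight, signedMiller, abs_of_nonneg (millerSeq_nonneg hμ _)]

theorem Lmat_mulVec_signedMiller (hμ : μ ≠ 0) :
    Lmat N μ *ᵥ signedMiller μ N = Pi.single 0 (millerWeight μ N) := by
  ext i
  refine Fin.cases ?_ (fun i => ?_) i
  · simp only [Lmat_mulVec_zero, signedMiller, millerWeight, Pi.single_eq_same, Fin.val_zero,
      Fin.val_succ, mul_sum]
    congr 1
    · simp
    · refine sum_congr rfl fun j _ => ?_
      rw [← mul_assoc, mul_assoc 2, ← pow_add, ← two_mul, pow_mul]
      simp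
  · rw [Pi.single_eq_of_ne (Fin.succ_ne_zero i)]
    refine (Lmat_mulVec_succ (V := fun k => (-1) ^ k * millerSeq μ N k) (by simp) i).trans ?_
    linear_combination (-1) ^ (i : ℕ) * millerSeq_recurrence hμ i.isLt

end signedMiller

section vecl1

variable {N : ℕ}

theorem vecl1_sub_le (v w : Fin (N + 1) → ℝ) : vecl1 (v - w) ≤ vecl1 v + vecl1 w := by
  have h := sum_le_sum (s := univ) fun (j : Fin N) _ => abs_sub (v j.succ) (w j.succ)
  have h₀ := abs_sub (v 0) (w 0)
  simp only [vecl1, Pi.sub_apply, sum_add_distrib] at *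
  linarith

theorem vecl1_smul (c : ℝ) (v : Fin (N + 1) → ℝ) : vecl1 (c • v) = |c| * vecl1 v := by
  simp only [vecl1, Pi.smul_apply, smul_eq_mul, abs_mul, ← mul_sum]
  ring

theorem vecl1_cons_zero (z : Fin N → ℝ) :
    vecl1 (Fin.cons 0 z : Fin (N + 1) → ℝ) = 2 * ∑ j, |z j| := by
  simp [vecl1]

end vecl1

theorem sum_abs_le_mat1norm {m n : ℕ} (A : Matrix (Fin m) (Fin n) ℝ) (l : Fin n) :
    ∑ i, |A i l| ≤ mat1norm A :=
  le_ciSup (f := fun l => ∑ i, |A i l|) (Set.finite_range _).bddAbove l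


noncomputable def lmatInvCol (μ : ℝ) (N : ℕ) : Fin (N + 1) → Fin (N + 1) → ℝ :=
  Fin.cons ((millerWeight μ N)⁻¹ • signedMiller μ N) fun n =>
    Fin.cons 0 ((Tmat N μ)⁻¹.col n) -
      ((∑ j : Fin N, 2 * (-1) ^ ((j : ℕ) + 1) * (Tmat N μ)⁻¹ j n) / millerWeight μ N) •
        signedMiller μ N

section lmatInvCol

variable {μ : ℝ} {N : ℕ}

theorem Lmat_mulVec_lmatInvCol (hμ : 0 < μ) (j : Fin (N + 1)) :
    Lmat N μ *ᵥ lmatInvCol μ N j = Pi.single j 1 := by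
  have hw : millerWeight μ N ≠ 0 := (one_pos.trans_le (one_le_millerWeight hμ.le)).ne'
  refine Fin.cases ?_ (fun n => ?_) j
  · simp [lmatInvCol, mulVec_smul, Lmat_mulVec_signedMiller hμ.ne', ← Pi.single_smul', hw]
  · have hT : Tmat N μ *ᵥ (Tmat N μ)⁻¹.col n = Pi.single n 1 := by
      rw [← mulVec_single_one, mulVec_mulVec, mul_nonsing_inv _ (isUnit_det_Tmat N μ),
        one_mulVec]
    simp only [lmatInvCol, Fin.cons_succ, mulVec_sub, mulVec_smul, Lmat_mulVec_signedMiller hμ.ne',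
      Lmat_mulVec_cons_zero, hT]
    ext i
    refine Fin.cases ?_ (fun i => ?_) i
    · simp [hw]
    · simp [Pi.single_apply]

theorem Lmat_mul_lmatInvCol (hμ : 0 < μ) : Lmat N μ * (of (lmatInvCol μ N))ᵀ = 1 := by
  ext i j
  exact congrFun (Lmat_mulVec_lmatInvCol hμ j) i |>.trans (by simp [Pi.single_apply, one_apply])
theorem vecl1_lmatInvCol_zero (hμ : 0 ≤ μ) : vecl1 (lmatInvCol μ N 0) = 1 := by
  have hw := one_le_millerWeight (N := N) hμ
  rw [lmatInvCol, Fin.cons_zero, vecl1_smul, vecl1_signedMiller hμ, abs_inv,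
    abs_of_pos (one_pos.trans_le hw), inv_mul_cancel₀ (one_pos.trans_le hw).ne']

theorem vecl1_lmatInvCol_succ_le (hμ : 0 ≤ μ) (n : Fin N) :
    vecl1 (lmatInvCol μ N n.succ) ≤ 4 * ∑ i, |(Tmat N μ)⁻¹ i n| := by
  have hw := one_pos.trans_le (one_le_millerWeight (N := N) hμ)
  set σ := ∑ j : Fin N, 2 * (-1) ^ ((j : ℕ) + 1) * (Tmat N μ)⁻¹ j n
  have hσ : |σ| ≤ 2 * ∑ i, |(Tmat N μ)⁻¹ i n| :=
    (abs_sum_le_sum_abs _ _).trans_eq <| by simp [abs_mul, mul_sum]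
  calc vecl1 (lmatInvCol μ N n.succ)
      ≤ vecl1 (Fin.cons 0 ((Tmat N μ)⁻¹.col n) : Fin (N + 1) → ℝ) +
          vecl1 ((σ / millerWeight μ N) • signedMiller μ N) := vecl1_sub_le _ _
    _ = 2 * ∑ i, |(Tmat N μ)⁻¹ i n| + |σ| := by
        rw [vecl1_cons_zero, vecl1_smul, vecl1_signedMiller hμ, abs_div, abs_of_pos hw,
          div_mul_cancel₀ _ hw.ne']
        simp only [col_apply]
    _ ≤ 4 * ∑ i, |(Tmat N μ)⁻¹ i n| := by linarith

end lmatInvCol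

theorem stmt14_general (μ : ℝ) (hμ : 0 < μ) (N : ℕ) :
    IsUnit (Lmat N μ) ∧
    vecl1 (fun i => (Lmat N μ)⁻¹ i 0) = 1 ∧
    matBl1 ((Lmat N μ)⁻¹) ≤ max (2 * mat1norm ((Tmat N μ)⁻¹)) 1 := by
  have hLB := Lmat_mul_lmatInvCol (N := N) hμ
  have hinv : (Lmat N μ)⁻¹ = (of (lmatInvCol μ N))ᵀ := inv_eq_right_inv hLB
  have hcol₀ := vecl1_lmatInvCol_zero (N := N) hμ.le
  refine ⟨(isUnit_iff_isUnit_det _).2 (isUnit_det_of_right_inverse hLB),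
    by rw [hinv]; exact hcol₀, ?_⟩
  rw [hinv]
  refine max_le (hcol₀.trans_le (le_max_right _ _)) <|
    Real.iSup_le (fun n => ?_) (le_max_of_le_right zero_le_one)
  have hcol := vecl1_lmatInvCol_succ_le hμ.le n
  have hnorm := sum_abs_le_mat1norm (Tmat N μ)⁻¹ n
  simp only [vecl1] at hcol
  simp only [transpose_apply, of_apply]
  exact le_max_of_le_left (by linarith)

/-- `L^{(N)}_μ` is invertible, the first column of its inverse has `ℓ¹` norm `1`, and
`‖(L^{(N)}_μ)⁻¹‖_{B(ℓ¹)} ≤ max{2‖T_N(μ)⁻¹‖₁, 1}`. -/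
theorem stmt14 (μ : ℝ) (hμ : 0 < μ) (N : ℕ) (hN : 1 ≤ N) :
    IsUnit (Lmat N μ) ∧
    vecl1 (fun i => (Lmat N μ)⁻¹ i 0) = 1 ∧
    matBl1 ((Lmat N μ)⁻¹) ≤ max (2 * mat1norm ((Tmat N μ)⁻¹)) 1 :=
  stmt14_general μ hμ N
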